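/- arXiv:2212.07533 — 6 statements merged into one kernel-verified Lean document; each statement's English description precedes it below -/
import Mathlib

section
/- Let G be a finite simple graph and x ≥ 1 an integer. Consider the ordering σ of the vertices obtained by repeatedly deleting a vertex whose x-th neighborhood in the current remaining induced subgraph has minimum size. Then σ is an x-degeneracy ordering of G of width exactly the x-degeneracy of G; that is, the maximum over all steps of the minimum x-th-neighborhood size encountered equals the minimum width over all x-degeneracy orderings of G. -/
/-!
Let `σ` be greedy and `τ` any ordering. For a step `v` of `σ`, let `w` be the `τ`-first vertex
among those still present at `v`. By greediness, the neighborhood of `v` at that step is no larger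
than that of `w` there; the remaining set at `v` lies inside the remaining set of `τ` at `w`, and
`x`-th neighborhoods only grow in larger induced subgraphs. Hence every step of `σ` is bounded by
the width of `τ`.
-/

/-- The `x`-th neighborhood of `v` in `G`: vertices `u` with `1 ≤ dist_G(u,v) ≤ x`. -/
def xNbhd {V : Type*} (G : SimpleGraph V) (x : ℕ) (v : V) : Set V :=
  {u | 1 ≤ G.edist u v ∧ G.edist u v ≤ x}

/-- The set of vertices appearing at or after `v` in the ordering `σ`. -/
def laterSet {V : Type*} (σ : V → ℕ) (v : V) : Set V := {u | σ v ≤ σ u}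

theorem mem_laterSet_self {V : Type*} (σ : V → ℕ) (v : V) : v ∈ laterSet σ v :=
  le_refl (σ v)

/-- `σ` (an injective enumeration, i.e. a linear ordering of the vertices) is an
`x`-degeneracy ordering of `G` of width `d`. -/
def IsXDegenOrdering {V : Type*} (G : SimpleGraph V) (x d : ℕ) (σ : V → ℕ) : Prop :=
  Function.Injective σ ∧
  ∀ v : V, (xNbhd (G.induce (laterSet σ v)) x ⟨v, mem_laterSet_self σ v⟩).ncard ≤ d

/-- The greedy ordering: at each step, the vertex removed next (i.e. the earliest
remaining vertex) has an `x`-th neighborhood of minimum size in the subgraph induced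
by the remaining vertices. -/
def IsGreedyOrdering {V : Type*} (G : SimpleGraph V) (x : ℕ) (σ : V → ℕ) : Prop :=
  Function.Injective σ ∧
  ∀ v : V, ∀ u, ∀ hu : u ∈ laterSet σ v,
    (xNbhd (G.induce (laterSet σ v)) x ⟨v, mem_laterSet_self σ v⟩).ncard ≤
      (xNbhd (G.induce (laterSet σ v)) x ⟨u, hu⟩).ncard

namespace SimpleGraph

variable {V W : Type*} {G : SimpleGraph V} {G' : SimpleGraph W}

theorem Hom.edist_le (f : G →g G') (u v : V) : G'.edist (f u) (f v) ≤ G.edist u v := by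
  by_cases hr : G.Reachable u v
  · obtain ⟨p, hp⟩ := hr.exists_walk_length_eq_edist
    rw [← hp, ← p.length_map f]
    exact SimpleGraph.edist_le _
  · rw [edist_eq_top_of_not_reachable hr]
    exact le_top

theorem Embedding.image_xNbhd_subset (f : G ↪g G') (x : ℕ) (v : V) :
    f '' xNbhd G x v ⊆ xNbhd G' x (f v) := by
  rintro _ ⟨u, ⟨hpos, hle⟩, rfl⟩
  have hne : u ≠ v := fun h => by simp [h] at hpos
  exact ⟨Order.one_le_iff_pos.mpr (edist_pos_of_ne (f.injective.ne hne)),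
    (f.toHom.edist_le u v).trans hle⟩

theorem Embedding.ncard_xNbhd_le [Finite W] (f : G ↪g G') (x : ℕ) (v : V) :
    (xNbhd G x v).ncard ≤ (xNbhd G' x (f v)).ncard := by
  rw [← Set.ncard_image_of_injective _ f.injective]
  exact Set.ncard_le_ncard (f.image_xNbhd_subset x v) (Set.toFinite _)

end SimpleGraph

theorem ncard_xNbhd_induce_mono {V : Type*} [Finite V] (G : SimpleGraph V) (x : ℕ)
    {S T : Set V} (h : S ⊆ T) (v : V) (hv : v ∈ S) :
    (xNbhd (G.induce S) x ⟨v, hv⟩).ncard ≤ (xNbhd (G.induce T) x ⟨v, h hv⟩).ncard :=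
  (G.induceHomOfLE h).ncard_xNbhd_le x ⟨v, hv⟩

theorem IsGreedyOrdering.ncard_xNbhd_le {V : Type*} [Finite V] {G : SimpleGraph V} {x : ℕ}
    {σ τ : V → ℕ} {d : ℕ} (hσ : IsGreedyOrdering G x σ) (hτ : IsXDegenOrdering G x d τ)
    (v : V) : (xNbhd (G.induce (laterSet σ v)) x ⟨v, mem_laterSet_self σ v⟩).ncard ≤ d := by
  obtain ⟨w, hw, hwmin⟩ :=
    Set.exists_min_image (laterSet σ v) τ (Set.toFinite _) ⟨v, mem_laterSet_self σ v⟩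
  have hsub : laterSet σ v ⊆ laterSet τ w := hwmin
  calc (xNbhd (G.induce (laterSet σ v)) x ⟨v, mem_laterSet_self σ v⟩).ncard
      ≤ (xNbhd (G.induce (laterSet σ v)) x ⟨w, hw⟩).ncard := hσ.2 v w hw
    _ ≤ (xNbhd (G.induce (laterSet τ w)) x ⟨w, hsub hw⟩).ncard :=
        ncard_xNbhd_induce_mono G x hsub w hw
    _ ≤ d := hτ.2 w

theorem stmt_1_general {V : Type*} [Fintype V] (G : SimpleGraph V) (x : ℕ)
    (σ : V → ℕ) (hσ : IsGreedyOrdering G x σ) :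
    Finset.univ.sup
        (fun v : V => (xNbhd (G.induce (laterSet σ v)) x ⟨v, mem_laterSet_self σ v⟩).ncard) =
      sInf {d : ℕ | ∃ τ : V → ℕ, IsXDegenOrdering G x d τ} := by
  set step : V → ℕ :=
    fun v => (xNbhd (G.induce (laterSet σ v)) x ⟨v, mem_laterSet_self σ v⟩).ncard
  have hσ_width : IsXDegenOrdering G x (Finset.univ.sup step) σ :=
    ⟨hσ.1, fun v => Finset.le_sup (f := step) (Finset.mem_univ v)⟩
  refine le_antisymm (le_csInf ⟨_, σ, hσ_width⟩ ?_) (Nat.sInf_le ⟨σ, hσ_width⟩)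
  rintro d ⟨τ, hτ⟩
  exact Finset.sup_le fun v _ => hσ.ncard_xNbhd_le hτ v

theorem stmt_1 {V : Type*} [Fintype V] (G : SimpleGraph V) (x : ℕ) (hx : 1 ≤ x)
    (σ : V → ℕ) (hσ : IsGreedyOrdering G x σ) :
    Finset.univ.sup
        (fun v : V => (xNbhd (G.induce (laterSet σ v)) x ⟨v, mem_laterSet_self σ v⟩).ncard) =
      sInf {d : ℕ | ∃ τ : V → ℕ, IsXDegenOrdering G x d τ} :=
  stmt_1_general G x σ hσ
end

section
/- Let G be a finite simple graph, s ≥ 1 an integer, σ a linear ordering of its vertices, and C a nonempty s-club of G. If v is the vertex of C that appears first in σ, then C ⊆ Q_s^σ[v]. -/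
/-- `C` is an `s`-club in `G`: any two vertices of `C` have distance at most `s`
in the induced subgraph `G[C]`. -/
def IsSClub {V : Type*} (G : SimpleGraph V) (s : ℕ) (C : Set V) : Prop :=
  ∀ u v : C, (G.induce C).edist u v ≤ s

/-- `Q_x^σ[v]`: the vertex `v` together with the `x`-th neighborhood of `v` in the
subgraph induced by `v` and the vertices appearing after `v` in the ordering `σ`. -/
def Qx {V : Type*} (G : SimpleGraph V) (σ : V → ℕ) (x : ℕ) (v : V) : Set V :=
  insert v (Subtype.val ''
    (xNbhd (G.induce (laterSet σ v)) x ⟨v, mem_laterSet_self σ v⟩))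

theorem stmt_7 {V : Type*} [Fintype V] (G : SimpleGraph V) (s : ℕ) (hs : 1 ≤ s)
    (σ : V → ℕ) (hσ : Function.Injective σ) (C : Set V) (hC : IsSClub G s C)
    (v : V) (hv : v ∈ C) (hfirst : ∀ u ∈ C, σ v ≤ σ u) :
    C ⊆ Qx G σ s v := by
  intro u hu
  by_cases huv : u = v
  · subst huv; exact Set.mem_insert u _
  · right
    refine ⟨⟨u, hfirst u hu⟩, ?_, rfl⟩
    have hsub : C ⊆ laterSet σ v := fun x hx => hfirst x hx
    -- map a shortest walk
    have hle := hC ⟨u, hu⟩ ⟨v, hv⟩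
    have hne : (G.induce C).edist ⟨u, hu⟩ ⟨v, hv⟩ ≠ ⊤ := by
      intro h
      rw [h] at hle
      exact absurd hle (by simp)
    obtain ⟨p, hp⟩ := SimpleGraph.exists_walk_of_edist_ne_top hne
    let φ : G.induce C →g G.induce (laterSet σ v) :=
      SimpleGraph.induceHom SimpleGraph.Hom.id hsub
    have hφu : φ ⟨u, hu⟩ = ⟨u, hfirst u hu⟩ := rfl
    have hφv : φ ⟨v, hv⟩ = ⟨v, mem_laterSet_self σ v⟩ := rfl
    have hq : ((G.induce (laterSet σ v)).edist ⟨u, hfirst u hu⟩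
        ⟨v, mem_laterSet_self σ v⟩) ≤ p.length := by
      have := SimpleGraph.edist_le ((p.map φ).copy hφu hφv)
      simpa using this
    constructor
    · exact Order.one_le_iff_pos.mpr <| SimpleGraph.edist_pos_of_ne (fun h => huv (congrArg Subtype.val h))
    · calc ((G.induce (laterSet σ v)).edist ⟨u, hfirst u hu⟩ ⟨v, mem_laterSet_self σ v⟩)
          ≤ p.length := hq
        _ = (G.induce C).edist ⟨u, hu⟩ ⟨v, hv⟩ := hp
        _ ≤ s := hle
end

section
/- Let G be a finite simple graph, s ≥ 1 an integer, and C an s-plex of G. Then C is an s-club of G; that is, any two vertices of C have distance at most s in the induced subgraph G[C]. -/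
/-- `C` is an `s`-plex in `G`: the induced subgraph `G[C]` is connected and every
vertex `v ∈ C` is nonadjacent to at most `s - 1` vertices of `C \ {v}`. -/
def IsSPlex {V : Type*} (G : SimpleGraph V) (s : ℕ) (C : Set V) : Prop :=
  (G.induce C).Connected ∧
  ∀ v : C, {u : C | u ≠ v ∧ ¬ G.Adj (v : V) (u : V)}.ncard ≤ s - 1

namespace SimpleGraph

variable {V : Type*} {G : SimpleGraph V} {u v : V}

lemma Walk.dist_getVert_of_length_eq_dist {p : G.Walk u v} (hp : p.length = G.dist u v)
    {n : ℕ} (hn : n ≤ p.length) : G.dist u (p.getVert n) = n := by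
  rw [← length_eq_dist_of_subwalk hp (p.isSubwalk_take n), take_length]
  omega

/-- Along a shortest `u`-`v` walk, the vertices after the second are non-neighbours of `u`, and
they are distinct since their distances from `u` are. -/
theorem Reachable.edist_le_encard_neighborSet_compl_add_one (h : G.Reachable u v) :
    G.edist u v ≤ (Gᶜ.neighborSet u).encard + 1 := by
  classical
  obtain ⟨p, hp⟩ := h.exists_walk_length_eq_dist
  set far := Finset.Icc 2 p.length
  have hdist : ∀ n ∈ far, G.dist u (p.getVert n) = n := fun n hn ↦
    p.dist_getVert_of_length_eq_dist hp (Finset.mem_Icc.1 hn).2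
  have hinj : Set.InjOn p.getVert far := fun m hm n hn hmn ↦
    (hdist m hm).symm.trans (hmn ▸ hdist n hn)
  have hsub : (far.image p.getVert : Set V) ⊆ Gᶜ.neighborSet u := by
    simp only [Finset.coe_image, Set.image_subset_iff]
    intro n hn
    have h2 : 2 ≤ n := (Finset.mem_Icc.1 hn).1
    have hdn := hdist n hn
    refine (compl_adj G u _).2 ⟨fun heq ↦ ?_, fun hadj ↦ ?_⟩
    · rw [← heq, dist_self] at hdn
      omega
    · rw [dist_eq_one_iff_adj.2 hadj] at hdn
      omega
  calc G.edist u v ≤ p.length := edist_le p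
    _ ≤ far.card + 1 := by rw [Nat.card_Icc]; norm_cast; omega
    _ = (far.image p.getVert).card + 1 := by rw [Finset.card_image_of_injOn hinj]
    _ ≤ (Gᶜ.neighborSet u).encard + 1 := by
      gcongr
      rw [← Set.encard_coe_eq_coe_finsetCard]
      exact Set.encard_le_encard hsub

end SimpleGraph

theorem stmt_11 {V : Type*} [Fintype V] (G : SimpleGraph V) (s : ℕ) (hs : 1 ≤ s)
    (C : Set V) (hC : IsSPlex G s C) : IsSClub G s C := by
  obtain ⟨hconn, hplex⟩ := hC
  intro u v
  have hnonadj : ((G.induce C)ᶜ.neighborSet u) = {w : C | w ≠ u ∧ ¬ G.Adj u w} := by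
    ext w
    simp [ne_comm]
  calc (G.induce C).edist u v ≤ ((G.induce C)ᶜ.neighborSet u).encard + 1 :=
        (hconn u v).edist_le_encard_neighborSet_compl_add_one
    _ = ({w : C | w ≠ u ∧ ¬ G.Adj u w}.ncard : ℕ∞) + 1 := by
        -- finiteness matters here: `ncard` of an infinite set is `0`
        rw [hnonadj, Set.Finite.cast_ncard_eq (Set.toFinite _)]
    _ ≤ ((s - 1 : ℕ) : ℕ∞) + 1 := by gcongr; exact hplex u
    _ = s := by norm_cast; omega
end

section
/- Let G be a finite simple graph, s ≥ 1 an integer, and C an s-plex of G. If C contains two vertices u and v with dist_{G[C]}(u,v) ≥ 3, then |C| ≤ 2s − 2. Equivalently, every s-plex with at least 2s − 1 vertices has diameter at most 2. -/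
/-!
If `dist(u, v) ≥ 3` in `G[C]`, no vertex of `C` is within distance one of both `u` and `v`, so
the non-neighbourhoods of `u` and `v` in `G[C]` cover `C`. Each has at most `s - 1` elements
by the plex condition, hence `|C| ≤ 2(s - 1)`.
-/

namespace SimpleGraph

variable {W : Type*} {H : SimpleGraph W} {u v : W}

lemma edist_le_one_of_eq_or_adj {w : W} (h : u = w ∨ H.Adj u w) : H.edist u w ≤ 1 := by
  rcases h with rfl | hadj
  · simp
  · exact (edist_eq_one_iff_adj.mpr hadj).le

lemma compl_neighborSet_union_eq_univ_of_three_le_edist (h : 3 ≤ H.edist u v) :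
    Hᶜ.neighborSet u ∪ Hᶜ.neighborSet v = Set.univ := by
  refine Set.eq_univ_of_forall fun w => ?_
  by_contra hw
  simp only [Set.mem_union, mem_neighborSet, compl_adj, not_or, not_and_or, not_not,
    ne_eq] at hw
  obtain ⟨hu, hv⟩ := hw
  have : H.edist u v ≤ 2 :=
    calc H.edist u v ≤ H.edist u w + H.edist w v := SimpleGraph.edist_triangle
      _ ≤ 1 + 1 := by
        rw [edist_comm (u := w)]
        gcongr
        · exact edist_le_one_of_eq_or_adj hu
        · exact edist_le_one_of_eq_or_adj hv
      _ = 2 := by norm_num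
  exact absurd (h.trans this) (by norm_num)

lemma card_le_ncard_compl_neighborSet_add_of_three_le_edist (h : 3 ≤ H.edist u v) :
    Nat.card W ≤ (Hᶜ.neighborSet u).ncard + (Hᶜ.neighborSet v).ncard := by
  rw [← Set.ncard_univ, ← compl_neighborSet_union_eq_univ_of_three_le_edist h]
  exact Set.ncard_union_le _ _

end SimpleGraph

lemma IsSPlex.ncard_compl_neighborSet_le {V : Type*} {G : SimpleGraph V} {s : ℕ} {C : Set V}
    (hC : IsSPlex G s C) (v : C) : ((G.induce C)ᶜ.neighborSet v).ncard ≤ s - 1 := by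
  convert hC.2 v using 2
  ext w
  simp [SimpleGraph.compl_adj, ne_comm]

theorem stmt_12_general {V : Type*} (G : SimpleGraph V) (s : ℕ)
    (C : Set V) (hC : IsSPlex G s C)
    (u v : C) (hdist : 3 ≤ (G.induce C).edist u v) :
    C.ncard ≤ 2 * s - 2 := by
  have hcover := SimpleGraph.card_le_ncard_compl_neighborSet_add_of_three_le_edist hdist
  rw [Nat.card_coe_set_eq] at hcover
  have hu := hC.ncard_compl_neighborSet_le u
  have hv := hC.ncard_compl_neighborSet_le v
  omega

theorem stmt_12 {V : Type*} [Fintype V] (G : SimpleGraph V) (s : ℕ) (hs : 1 ≤ s)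
    (C : Set V) (hC : IsSPlex G s C)
    (u v : C) (hdist : 3 ≤ (G.induce C).edist u v) :
    C.ncard ≤ 2 * s - 2 :=
  stmt_12_general G s C hC u v hdist
end

section
/- Let G be a finite simple graph, s ≥ 1 an integer, σ a linear ordering of its vertices, and C an s-plex of G with |C| ≥ 2s − 1. If v is the vertex of C that appears first in σ, then C ⊆ Q_2^σ[v]. -/
/-!
If two vertices `u, v` of an `s`-plex `C` are neither adjacent nor have a common neighbour in `C`,
then every vertex of `C` is a non-neighbour of `v` or of `u` (`u` itself being one of `v`, and
`v` one of `u`), so `|C| ≤ 2(s - 1) < 2s - 1`. Hence any two vertices of a large `s`-plex are at distance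
at most two inside `C`, and if `v` comes first in `σ` then all of `C` lies after `v`, so these
short paths survive in the graph induced by the vertices after `v`.
-/

namespace SimpleGraph

variable {V : Type*} {G : SimpleGraph V}

lemma ncard_le_ncard_nonAdj_add_ncard_nonAdj {C : Set V} (hC : C.Finite) {u v : C}
    (huv : u ≠ v) (hnadj : ¬ G.Adj v u) (hno : ∀ w : C, ¬ (G.Adj v w ∧ G.Adj u w)) :
    C.ncard ≤ {w : C | w ≠ v ∧ ¬ G.Adj v w}.ncard + {w : C | w ≠ u ∧ ¬ G.Adj u w}.ncard := by
  have : Finite C := hC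
  have hcover : (Set.univ : Set C) ⊆
      {w : C | w ≠ v ∧ ¬ G.Adj v w} ∪ {w : C | w ≠ u ∧ ¬ G.Adj u w} := by
    intro w _
    by_cases hvw : w ≠ v ∧ ¬ G.Adj v w
    · exact Or.inl hvw
    right
    obtain rfl | hadj : w = v ∨ G.Adj v w := by tauto
    · exact ⟨huv.symm, fun h => hnadj h.symm⟩
    · exact ⟨by rintro rfl; exact hnadj hadj, fun h => hno w ⟨hadj, h⟩⟩
  calc C.ncard = (Set.univ : Set C).ncard := by rw [Set.ncard_univ, Nat.card_coe_set_eq]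
    _ ≤ _ := (Set.ncard_le_ncard hcover).trans (Set.ncard_union_le _ _)

end SimpleGraph

lemma IsSPlex.exists_common_adj {V : Type*} {G : SimpleGraph V} {s : ℕ} {C : Set V}
    (hC : IsSPlex G s C) (hs : 1 ≤ s) (hsize : 2 * s - 1 ≤ C.ncard) {u v : V} (hu : u ∈ C) (hv : v ∈ C) (huv : u ≠ v)
    (hnadj : ¬ G.Adj v u) : ∃ w ∈ C, G.Adj v w ∧ G.Adj u w := by
  by_contra! hno
  have hfin : C.Finite := Set.finite_of_ncard_pos (by omega)
  have hcard := SimpleGraph.ncard_le_ncard_nonAdj_add_ncard_nonAdj hfin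
    (u := ⟨u, hu⟩) (v := ⟨v, hv⟩) (by simpa using huv) hnadj (fun w hw => hno w w.2 hw.1 hw.2)
  have hv_plex := hC.2 ⟨v, hv⟩
  have hu_plex := hC.2 ⟨u, hu⟩
  omega

section Qx

variable {V : Type*} {G : SimpleGraph V} {σ : V → ℕ} {x : ℕ} {u v : V}

lemma mem_Qx_of_edist_le (hu : u ∈ laterSet σ v) (huv : u ≠ v)
    (h : (G.induce (laterSet σ v)).edist ⟨u, hu⟩ ⟨v, mem_laterSet_self σ v⟩ ≤ x) :
    u ∈ Qx G σ x v := by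
  refine Or.inr ⟨⟨u, hu⟩, ⟨?_, h⟩, rfl⟩
  exact Order.one_le_iff_ne_zero.mpr (SimpleGraph.edist_eq_zero_iff.not.mpr (by simpa using huv))

lemma mem_Qx_of_adj (hx : 1 ≤ x) (hu : u ∈ laterSet σ v) (hadj : G.Adj v u) :
    u ∈ Qx G σ x v := by
  refine mem_Qx_of_edist_le hu hadj.ne' ?_
  rw [SimpleGraph.edist_eq_one_iff_adj.mpr
    (show (G.induce (laterSet σ v)).Adj ⟨u, hu⟩ ⟨v, _⟩ from hadj.symm)]
  exact_mod_cast hx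

lemma mem_Qx_two_of_adj_of_adj {w : V} (hu : u ∈ laterSet σ v) (hw : w ∈ laterSet σ v)
    (huv : u ≠ v) (hvw : G.Adj v w) (hwu : G.Adj w u) : u ∈ Qx G σ 2 v := by
  refine mem_Qx_of_edist_le hu huv ?_
  let w' : laterSet σ v := ⟨w, hw⟩
  calc _ ≤ (G.induce (laterSet σ v)).edist ⟨u, hu⟩ w' + (G.induce _).edist w' ⟨v, _⟩ :=
        SimpleGraph.edist_triangle
    _ = 1 + 1 := by
        rw [SimpleGraph.edist_eq_one_iff_adj.mpr
            (show (G.induce (laterSet σ v)).Adj ⟨u, hu⟩ w' from hwu.symm),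
          SimpleGraph.edist_eq_one_iff_adj.mpr
            (show (G.induce (laterSet σ v)).Adj w' ⟨v, _⟩ from hvw.symm)]
    _ = 2 := by norm_num

end Qx

theorem stmt_14_general {V : Type*} (G : SimpleGraph V) (s : ℕ) (hs : 1 ≤ s)
    (σ : V → ℕ)
    (C : Set V) (hC : IsSPlex G s C) (hsize : 2 * s - 1 ≤ C.ncard)
    (v : V) (hv : v ∈ C) (hfirst : ∀ u ∈ C, σ v ≤ σ u) :
    C ⊆ Qx G σ 2 v := by
  intro u hu
  by_cases huv : u = v
  · exact Or.inl huv
  by_cases hadj : G.Adj v u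
  · exact mem_Qx_of_adj one_le_two (hfirst u hu) hadj
  obtain ⟨w, hw, hvw, huw⟩ := hC.exists_common_adj hs hsize hu hv huv hadj
  exact mem_Qx_two_of_adj_of_adj (hfirst u hu) (hfirst w hw) huv hvw huw.symm

theorem stmt_14 {V : Type*} [Fintype V] (G : SimpleGraph V) (s : ℕ) (hs : 1 ≤ s)
    (σ : V → ℕ) (hσ : Function.Injective σ)
    (C : Set V) (hC : IsSPlex G s C) (hsize : 2 * s - 1 ≤ C.ncard)
    (v : V) (hv : v ∈ C) (hfirst : ∀ u ∈ C, σ v ≤ σ u) :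
    C ⊆ Qx G σ 2 v :=
  stmt_14_general G s hs σ C hC hsize v hv hfirst
end

section
/- Let G be a finite simple graph, s ≥ 1 an integer, σ a linear ordering of its vertices, and k ≥ 2s − 1. Then G contains an s-plex of size k if and only if there exists a vertex v such that the induced subgraph G[Q_2^σ[v]] contains an s-plex of size k. -/
open Set in
noncomputable def imIso {V : Type*} (G : SimpleGraph V) (A : Set V) (B : Set A) :
    (G.induce A).induce B ≃g G.induce (Subtype.val '' B) where
  toEquiv := Equiv.Set.image Subtype.val B Subtype.val_injective
  map_rel_iff' := by
    intro a b
    simp [Equiv.Set.image, Equiv.Set.imageOfInjOn]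

open Set in
lemma imIso_coe {V : Type*} (G : SimpleGraph V) (A : Set V) (B : Set A) (u : B) :
    ((imIso G A B u : Subtype.val '' B) : V) = ((u : A) : V) := rfl

open Set in
lemma plexset_eq {V : Type*} (G : SimpleGraph V) (A : Set V) (B : Set A) (v : B) :
    {u : (Subtype.val '' B : Set V) | u ≠ imIso G A B v ∧
        ¬ G.Adj ((imIso G A B v : Subtype.val '' B) : V) (u : V)} =
      (imIso G A B) '' {u : B | u ≠ v ∧ ¬ (G.induce A).Adj (v : A) (u : A)} := by
  ext u'
  obtain ⟨u, rfl⟩ := (imIso G A B).surjective u'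
  simp only [Set.mem_setOf_eq, Set.mem_image]
  constructor
  · rintro ⟨h1, h2⟩
    exact ⟨u, ⟨fun h => h1 (by rw [h]), fun h => h2 h⟩, rfl⟩
  · rintro ⟨w, ⟨h1, h2⟩, hw⟩
    obtain rfl : w = u := (imIso G A B).injective hw
    exact ⟨fun h => h1 ((imIso G A B).injective (Subtype.ext (congrArg Subtype.val h))),
      fun h => h2 h⟩

open Set in
lemma isSPlex_image_iff {V : Type*} [Finite V] (G : SimpleGraph V) (s : ℕ) (A : Set V)
    (B : Set A) : IsSPlex (G.induce A) s B ↔ IsSPlex G s (Subtype.val '' B) := by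
  constructor
  · rintro ⟨hc, hd⟩
    refine ⟨(imIso G A B).connected_iff.mp hc, ?_⟩
    intro v'
    obtain ⟨v, rfl⟩ := (imIso G A B).surjective v'
    rw [show {u : (Subtype.val '' B : Set V) | u ≠ imIso G A B v ∧
        ¬ G.Adj ((imIso G A B v : Subtype.val '' B) : V) (u : V)} = _ from plexset_eq G A B v,
      Set.ncard_image_of_injective _ (imIso G A B).injective]
    exact hd v
  · rintro ⟨hc, hd⟩
    refine ⟨(imIso G A B).connected_iff.mpr hc, ?_⟩
    intro v
    have := hd (imIso G A B v)
    rwa [show {u : (Subtype.val '' B : Set V) | u ≠ imIso G A B v ∧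
        ¬ G.Adj ((imIso G A B v : Subtype.val '' B) : V) (u : V)} = _ from plexset_eq G A B v,
      Set.ncard_image_of_injective _ (imIso G A B).injective] at this

theorem stmt_15 {V : Type*} [Fintype V] (G : SimpleGraph V) (s : ℕ) (hs : 1 ≤ s)
    (σ : V → ℕ) (hσ : Function.Injective σ) (k : ℕ) (hk : 2 * s - 1 ≤ k) :
    (∃ C : Set V, IsSPlex G s C ∧ C.ncard = k) ↔
    (∃ v : V, ∃ C : Set (Qx G σ 2 v),
      IsSPlex (G.induce (Qx G σ 2 v)) s C ∧ C.ncard = k) := by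
  constructor
  · rintro ⟨C, hC, hcard⟩
    -- pick σ-minimal vertex of C
    have hk1 : 1 ≤ k := le_trans (by omega) hk
    have hCne : C.Nonempty := by
      rw [← Set.ncard_pos (Set.toFinite C), hcard]; omega
    obtain ⟨v, hvC, hvmin⟩ := Set.exists_min_image C σ (Set.toFinite C) hCne
    have hlater : ∀ u ∈ C, u ∈ laterSet σ v := fun u hu => hvmin u hu
    obtain ⟨hconn, hdeg⟩ := hC
    -- degree counting helper: every x ∈ C has ≥ k - s neighbors in C
    have key : ∀ x (hx : x ∈ C), k - s ≤ {w : C | w ≠ ⟨x, hx⟩ ∧ G.Adj x (w : V)}.ncard := by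
      intro x hx
      set xc : C := ⟨x, hx⟩
      have hsplit : {w : C | w ≠ xc} =
          {w : C | w ≠ xc ∧ G.Adj x (w : V)} ∪ {w : C | w ≠ xc ∧ ¬ G.Adj x (w : V)} := by
        ext w; by_cases h : G.Adj x (w : V) <;> simp [h]
      have hdisj : Disjoint {w : C | w ≠ xc ∧ G.Adj x (w : V)}
          {w : C | w ≠ xc ∧ ¬ G.Adj x (w : V)} := by
        rw [Set.disjoint_left]; rintro w ⟨_, h⟩ ⟨_, h'⟩; exact h' h
      have hcard1 : {w : C | w ≠ xc}.ncard = k - 1 := by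
        have : {w : C | w ≠ xc} = (Set.univ : Set C) \ {xc} := by ext w; simp
        rw [this, Set.ncard_diff_singleton_of_mem (Set.mem_univ _),
          Set.ncard_univ, Nat.card_coe_set_eq, hcard]
      have hthis : {w : C | w ≠ xc ∧ ¬ G.Adj x (w : V)}.ncard ≤ s - 1 := hdeg xc
      have hun : {w : C | w ≠ xc}.ncard =
          {w : C | w ≠ xc ∧ G.Adj x (w : V)}.ncard +
          {w : C | w ≠ xc ∧ ¬ G.Adj x (w : V)}.ncard := by
        rw [hsplit, Set.ncard_union_eq hdisj (Set.toFinite _) (Set.toFinite _)]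
      omega
    have hsub : C ⊆ Qx G σ 2 v := by
      intro u huC
      rcases eq_or_ne u v with rfl | hne
      · exact Set.mem_insert _ _
      · right
        refine ⟨⟨u, hlater u huC⟩, ⟨?_, ?_⟩, rfl⟩
        · rw [ENat.one_le_iff_ne_zero, Ne, SimpleGraph.edist_eq_zero_iff]
          exact fun h => hne (congrArg Subtype.val h)
        · -- distance at most two
          by_cases hadj : G.Adj u v
          · have : (G.induce (laterSet σ v)).Adj ⟨u, hlater u huC⟩ ⟨v, mem_laterSet_self σ v⟩ :=
              hadj
            rw [← SimpleGraph.edist_eq_one_iff_adj] at this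
            rw [this]; exact one_le_two
          · -- find a common neighbor
            have h1 := key v hvC
            have h2 := key u huC
            set vc : C := ⟨v, hvC⟩
            set uc : C := ⟨u, huC⟩
            have hvu : vc ≠ uc := fun h => hne (congrArg Subtype.val h).symm
            have hsubT : {w : C | w ≠ vc ∧ G.Adj v (w : V)} ∪
                {w : C | w ≠ uc ∧ G.Adj u (w : V)} ⊆ (Set.univ : Set C) \ {vc, uc} := by
              rintro w (⟨h1', h2'⟩ | ⟨h1', h2'⟩) <;>
                refine ⟨Set.mem_univ _, ?_⟩ <;> simp only [Set.mem_insert_iff,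
                  Set.mem_singleton_iff] <;> push_neg
              · exact ⟨h1', fun h => hadj (by rw [h] at h2'; exact h2'.symm)⟩
              · exact ⟨fun h => hadj (by rw [h] at h2'; exact h2'), h1'⟩
            have hTcard : ((Set.univ : Set C) \ {vc, uc}).ncard = k - 2 := by
              rw [Set.ncard_diff (by simp) (Set.toFinite _), Set.ncard_pair hvu,
                Set.ncard_univ, Nat.card_coe_set_eq, hcard]
            have hion : ({w : C | w ≠ vc ∧ G.Adj v (w : V)} ∩
                {w : C | w ≠ uc ∧ G.Adj u (w : V)}).Nonempty := by
              by_contra hno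
              rw [Set.not_nonempty_iff_eq_empty] at hno
              have hd2 : Disjoint {w : C | w ≠ vc ∧ G.Adj v (w : V)}
                  {w : C | w ≠ uc ∧ G.Adj u (w : V)} := Set.disjoint_iff_inter_eq_empty.mpr hno
              have hle := Set.ncard_le_ncard hsubT (Set.toFinite _)
              rw [Set.ncard_union_eq hd2 (Set.toFinite _) (Set.toFinite _), hTcard] at hle
              have hks : s ≤ k := by omega
              have hk2 : 2 ≤ k := by
                have hsub2 : ({u, v} : Set V) ⊆ C := by
                  rintro x (rfl | rfl); exacts [huC, hvC]
                have := Set.ncard_le_ncard hsub2 (Set.toFinite C)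
                rwa [Set.ncard_pair hne, hcard] at this
              omega
            obtain ⟨w, ⟨_, hwv⟩, ⟨_, hwu⟩⟩ := hion
            have hwL : (w : V) ∈ laterSet σ v := hlater _ w.2
            set G' := G.induce (laterSet σ v)
            have e1 : G'.edist ⟨u, hlater u huC⟩ ⟨(w : V), hwL⟩ = 1 :=
              SimpleGraph.edist_eq_one_iff_adj.mpr hwu
            have e2 : G'.edist ⟨(w : V), hwL⟩ ⟨v, mem_laterSet_self σ v⟩ = 1 :=
              SimpleGraph.edist_eq_one_iff_adj.mpr hwv.symm
            calc G'.edist ⟨u, hlater u huC⟩ ⟨v, mem_laterSet_self σ v⟩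
                ≤ G'.edist ⟨u, hlater u huC⟩ ⟨(w : V), hwL⟩ +
                  G'.edist ⟨(w : V), hwL⟩ ⟨v, mem_laterSet_self σ v⟩ :=
                  SimpleGraph.edist_triangle
              _ ≤ 2 := by rw [e1, e2]; rfl
    -- package as subset of Qx
    refine ⟨v, Subtype.val ⁻¹' C, ?_, ?_⟩
    · rw [isSPlex_image_iff, Subtype.image_preimage_coe,
        Set.inter_eq_self_of_subset_right hsub]
      exact ⟨hconn, hdeg⟩
    · rw [← Set.ncard_image_of_injective _ Subtype.val_injective,
        Subtype.image_preimage_coe, Set.inter_eq_self_of_subset_right hsub, hcard]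
  · rintro ⟨v, C, hC, hcard⟩
    exact ⟨Subtype.val '' C, (isSPlex_image_iff G s _ C).mp hC,
      by rw [Set.ncard_image_of_injective _ Subtype.val_injective, hcard]⟩
end
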